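/- (Lemma 1: sufficient condition for Z diagonal) If λ₁ > (λ₂+λ₃)/2, then at any optimal solution (Θ*, V*, Z*) of the hub graphical lasso with q ≥ 1, the matrix Z* is diagonal. -/

import Mathlib

open Matrix BigOperators

/-- The off-diagonal part `A - diag(A)` of a square matrix. -/
def offd {p : ℕ} (A : Matrix (Fin p) (Fin p) ℝ) : Matrix (Fin p) (Fin p) ℝ :=
  A - Matrix.diagonal (fun i => A i i)

/-- The hub graphical lasso objective, as a function of a decomposition `(Θ, V, Z)`. -/
noncomputable def hglObj {p : ℕ} (l1 l2 l3 q : ℝ) (S : Matrix (Fin p) (Fin p) ℝ)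
    (Θ V Z : Matrix (Fin p) (Fin p) ℝ) : ℝ :=
  -Real.log Θ.det + (S * Θ).trace +
    l1 * (∑ i, ∑ j, |offd Z i j|) + l2 * (∑ i, ∑ j, |offd V i j|) +
    l3 * ∑ j, (∑ i, |offd V i j| ^ q) ^ (1 / q)

/-
Moving the off-diagonal part of `Z` into `V`, i.e. replacing `(V, Z)` by
`(V + ½ offd Z, diag Z)`, leaves `Θ = Z + V + Vᵀ` unchanged when `Z` is symmetric. It removes the
`λ₁`-penalty `λ₁ ‖offd Z‖₁` and, by the triangle inequality and `‖x‖_q ≤ ‖x‖₁`, raises the two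
`V`-penalties by at most `(λ₂ + λ₃)/2 · ‖offd Z‖₁`. So at an optimum
`(λ₁ - (λ₂ + λ₃)/2) ‖offd Z‖₁ ≤ 0`, forcing `offd Z = 0` when `λ₁ > (λ₂ + λ₃)/2`.
-/

open Finset

namespace Real

theorem rpow_sum_abs_rpow_le_sum_abs {ι : Type*} (s : Finset ι) (f : ι → ℝ) {q : ℝ}
    (hq : 1 ≤ q) : (∑ i ∈ s, |f i| ^ q) ^ (1 / q) ≤ ∑ i ∈ s, |f i| := by
  have hq0 : q ≠ 0 := by positivity
  have hpow : ∑ i ∈ s, |f i| ^ q ≤ (∑ i ∈ s, |f i|) ^ q := by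
    induction s using Finset.cons_induction with
    | empty => simp [zero_rpow hq0]
    | cons a s ha ih =>
      rw [sum_cons, sum_cons]
      calc |f a| ^ q + ∑ i ∈ s, |f i| ^ q ≤ |f a| ^ q + (∑ i ∈ s, |f i|) ^ q := by
            gcongr
        _ ≤ (|f a| + ∑ i ∈ s, |f i|) ^ q :=
            add_rpow_le_rpow_add (abs_nonneg _) (sum_nonneg fun i _ => abs_nonneg _) hq
  have hsum_nonneg : 0 ≤ ∑ i ∈ s, |f i| := sum_nonneg fun i _ => abs_nonneg (f i)
  calc (∑ i ∈ s, |f i| ^ q) ^ (1 / q) ≤ ((∑ i ∈ s, |f i|) ^ q) ^ (1 / q) := by gcongr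
    _ = ∑ i ∈ s, |f i| := by rw [one_div, rpow_rpow_inv hsum_nonneg hq0]

end Real

section MatrixNorms

variable {m n : Type*} [Fintype m] [Fintype n]

def entrywiseL1Norm (A : Matrix m n ℝ) : ℝ := ∑ i, ∑ j, |A i j|

noncomputable def columnLqNormSum (q : ℝ) (A : Matrix m n ℝ) : ℝ :=
  ∑ j, (∑ i, |A i j| ^ q) ^ (1 / q)

theorem entrywiseL1Norm_add_le (A B : Matrix m n ℝ) :
    entrywiseL1Norm (A + B) ≤ entrywiseL1Norm A + entrywiseL1Norm B := by
  simp only [entrywiseL1Norm, ← sum_add_distrib]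
  exact sum_le_sum fun i _ => sum_le_sum fun j _ => abs_add_le (A i j) (B i j)

theorem entrywiseL1Norm_smul (c : ℝ) (A : Matrix m n ℝ) :
    entrywiseL1Norm (c • A) = |c| * entrywiseL1Norm A := by
  simp [entrywiseL1Norm, abs_mul, mul_sum]

theorem entrywiseL1Norm_eq_zero_iff {A : Matrix m n ℝ} : entrywiseL1Norm A = 0 ↔ A = 0 := by
  rw [entrywiseL1Norm, sum_eq_zero_iff_of_nonneg fun i _ => sum_nonneg fun j _ => abs_nonneg _,
    ← Matrix.ext_iff]
  simp [sum_eq_zero_iff_of_nonneg]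

theorem entrywiseL1Norm_nonneg (A : Matrix m n ℝ) : 0 ≤ entrywiseL1Norm A :=
  sum_nonneg fun i _ => sum_nonneg fun j _ => abs_nonneg (A i j)

theorem columnLqNormSum_add_le {q : ℝ} (hq : 1 ≤ q) (A B : Matrix m n ℝ) :
    columnLqNormSum q (A + B) ≤ columnLqNormSum q A + columnLqNormSum q B := by
  simp only [columnLqNormSum, ← sum_add_distrib]
  exact sum_le_sum fun j _ => Real.Lp_add_le univ (fun i => A i j) (fun i => B i j) hq

theorem columnLqNormSum_le_entrywiseL1Norm {q : ℝ} (hq : 1 ≤ q) (A : Matrix m n ℝ) :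
    columnLqNormSum q A ≤ entrywiseL1Norm A := by
  rw [entrywiseL1Norm, sum_comm]
  exact sum_le_sum fun j _ => Real.rpow_sum_abs_rpow_le_sum_abs univ (fun i => A i j) hq

end MatrixNorms

section OffDiagonal

variable {p : ℕ}

theorem offd_apply (A : Matrix (Fin p) (Fin p) ℝ) (i j : Fin p) :
    offd A i j = if i = j then 0 else A i j := by
  by_cases h : i = j <;> simp [offd, h]

theorem offd_eq_zero_iff {A : Matrix (Fin p) (Fin p) ℝ} :
    offd A = 0 ↔ ∀ i j, i ≠ j → A i j = 0 := by
  rw [← Matrix.ext_iff]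
  simp [offd_apply]

theorem offd_add (A B : Matrix (Fin p) (Fin p) ℝ) : offd (A + B) = offd A + offd B := by
  simp only [offd, Matrix.add_apply, ← diagonal_add]
  abel

theorem offd_smul (c : ℝ) (A : Matrix (Fin p) (Fin p) ℝ) : offd (c • A) = c • offd A := by
  simp only [offd, Matrix.smul_apply, ← diagonal_smul, smul_sub]
  rfl

theorem offd_offd (A : Matrix (Fin p) (Fin p) ℝ) : offd (offd A) = offd A := by
  ext i j; by_cases h : i = j <;> simp [offd_apply, h]

theorem offd_diagonal (d : Fin p → ℝ) : offd (Matrix.diagonal d) = 0 := by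
  ext i j; by_cases h : i = j <;> simp [offd_apply, h]

theorem Matrix.IsSymm.offd {A : Matrix (Fin p) (Fin p) ℝ} (hA : A.IsSymm) : (offd A).IsSymm := by
  ext i j
  rcases eq_or_ne i j with rfl | h
  · rfl
  · simp [offd_apply, h, h.symm, hA.apply i j]

theorem add_add_transpose_eq_diagonal_add {Z : Matrix (Fin p) (Fin p) ℝ} (hZ : Z.IsSymm)
    (V : Matrix (Fin p) (Fin p) ℝ) :
    Z + V + Vᵀ = Matrix.diagonal (fun i => Z i i) + (V + (1 / 2 : ℝ) • offd Z) +
      (V + (1 / 2 : ℝ) • offd Z)ᵀ := by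
  have hZ_split : Z = Matrix.diagonal (fun i => Z i i) + offd Z := by simp [offd]
  rw [Matrix.transpose_add, Matrix.transpose_smul, hZ.offd.eq]
  nth_rw 1 [hZ_split]
  module

end OffDiagonal

theorem hglObj_eq {p : ℕ} (l1 l2 l3 q : ℝ) (S Θ V Z : Matrix (Fin p) (Fin p) ℝ) :
    hglObj l1 l2 l3 q S Θ V Z = -Real.log Θ.det + (S * Θ).trace +
      l1 * entrywiseL1Norm (offd Z) + l2 * entrywiseL1Norm (offd V) +
      l3 * columnLqNormSum q (offd V) := rfl

theorem hglObj_shift_offd_le {p : ℕ} (l1 : ℝ) {l2 l3 q : ℝ} (h2 : 0 ≤ l2) (h3 : 0 ≤ l3)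
    (hq : 1 ≤ q) (S Θ V Z : Matrix (Fin p) (Fin p) ℝ) :
    hglObj l1 l2 l3 q S Θ (V + (1 / 2 : ℝ) • offd Z) (Matrix.diagonal fun i => Z i i) +
        (l1 - (l2 + l3) / 2) * entrywiseL1Norm (offd Z) ≤
      hglObj l1 l2 l3 q S Θ V Z := by
  have hshift : offd (V + (1 / 2 : ℝ) • offd Z) = offd V + (1 / 2 : ℝ) • offd Z := by
    rw [offd_add, offd_smul, offd_offd]
  have hhalf : entrywiseL1Norm ((1 / 2 : ℝ) • offd Z) = 1 / 2 * entrywiseL1Norm (offd Z) := by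
    rw [entrywiseL1Norm_smul]; norm_num
  have hL1 : entrywiseL1Norm (offd V + (1 / 2 : ℝ) • offd Z) ≤
      entrywiseL1Norm (offd V) + 1 / 2 * entrywiseL1Norm (offd Z) :=
    hhalf ▸ entrywiseL1Norm_add_le _ _
  have hLq : columnLqNormSum q (offd V + (1 / 2 : ℝ) • offd Z) ≤
      columnLqNormSum q (offd V) + 1 / 2 * entrywiseL1Norm (offd Z) :=
    calc _ ≤ columnLqNormSum q (offd V) + columnLqNormSum q ((1 / 2 : ℝ) • offd Z) :=
          columnLqNormSum_add_le hq _ _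
      _ ≤ _ := by rw [← hhalf]; gcongr; exact columnLqNormSum_le_entrywiseL1Norm hq _
  rw [hglObj_eq, hglObj_eq, hshift, offd_diagonal, entrywiseL1Norm_eq_zero_iff.2 rfl]
  linarith [mul_le_mul_of_nonneg_left hL1 h2, mul_le_mul_of_nonneg_left hLq h3]

theorem hgl_Z_diagonal_general {p : ℕ} (l1 l2 l3 q : ℝ)
    (h2 : 0 ≤ l2) (h3 : 0 ≤ l3) (hq : 1 ≤ q)
    (hl : l1 > (l2 + l3) / 2)
    (S : Matrix (Fin p) (Fin p) ℝ)
    (Θs Vs Zs : Matrix (Fin p) (Fin p) ℝ)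
    (hpos : Θs.PosDef) (hZsym : Zs.IsSymm) (hdecomp : Θs = Zs + Vs + Vsᵀ)
    (hopt : ∀ Θ V Z : Matrix (Fin p) (Fin p) ℝ, Θ.PosDef → Z.IsSymm →
      Θ = Z + V + Vᵀ → hglObj l1 l2 l3 q S Θs Vs Zs ≤ hglObj l1 l2 l3 q S Θ V Z) :
    ∀ i j : Fin p, i ≠ j → Zs i j = 0 := by
  have hopt_shift := hopt Θs _ _ hpos (Matrix.isSymm_diagonal _)
    (hdecomp.trans (add_add_transpose_eq_diagonal_add hZsym Vs))
  have hshift := hglObj_shift_offd_le l1 h2 h3 hq S Θs Vs Zs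
  have hnorm : entrywiseL1Norm (offd Zs) = 0 := by
    nlinarith [entrywiseL1Norm_nonneg (offd Zs)]
  exact offd_eq_zero_iff.1 (entrywiseL1Norm_eq_zero_iff.1 hnorm)

/-- Lemma 1: if `λ₁ > (λ₂+λ₃)/2`, then at any optimal solution `(Θ*, V*, Z*)` of the
hub graphical lasso with `q ≥ 1`, the matrix `Z*` is diagonal. -/
theorem hgl_Z_diagonal {p : ℕ} (l1 l2 l3 q : ℝ)
    (h2 : 0 ≤ l2) (h3 : 0 ≤ l3) (hq : 1 ≤ q)
    (hl : l1 > (l2 + l3) / 2)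
    (S : Matrix (Fin p) (Fin p) ℝ) (hS : S.IsSymm)
    (Θs Vs Zs : Matrix (Fin p) (Fin p) ℝ)
    (hpos : Θs.PosDef) (hZsym : Zs.IsSymm) (hdecomp : Θs = Zs + Vs + Vsᵀ)
    (hopt : ∀ Θ V Z : Matrix (Fin p) (Fin p) ℝ, Θ.PosDef → Z.IsSymm →
      Θ = Z + V + Vᵀ → hglObj l1 l2 l3 q S Θs Vs Zs ≤ hglObj l1 l2 l3 q S Θ V Z) :
    ∀ i j : Fin p, i ≠ j → Zs i j = 0 :=
  hgl_Z_diagonal_general l1 l2 l3 q h2 h3 hq hl S Θs Vs Zs hpos hZsym hdecomp hopt
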